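/- arXiv:2412.05682 — 8 statements merged into one kernel-verified Lean document; each statement's English description precedes it below -/
import Mathlib

section
/- Let A be an n×m matrix over ℂ × ℂ (a bicomplex matrix), and suppose there exist injective maps f : Fin r → Fin n and g : Fin r → Fin m such that det (A.submatrix f g) is a unit of ℂ × ℂ. Then r ≤ rank(¹A) and r ≤ rank(²A), where rank denotes the usual rank of a complex matrix. (This is the content of the inequality ρ(A) ≤ min(ρ(¹A), ρ(²A)) for the bicomplex rank ρ.) -/
open Matrix

lemma rank_ge_of_submatrix_isUnit_det {n m r : ℕ} (M : Matrix (Fin n) (Fin m) ℂ)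
    (f : Fin r → Fin n) (g : Fin r → Fin m) (h : IsUnit (M.submatrix f g).det) :
    r ≤ M.rank := by
  have hsub : M.submatrix f g =
      (1 : Matrix (Fin n) (Fin n) ℂ).submatrix f id * M *
        (1 : Matrix (Fin m) (Fin m) ℂ).submatrix id g := by
    ext i j
    simp [mul_apply, one_apply, Finset.sum_ite_eq, Finset.sum_ite_eq']
  have hr : (M.submatrix f g).rank = r := by
    rw [Matrix.rank_of_isUnit _ ((Matrix.isUnit_iff_isUnit_det _).mpr h), Fintype.card_fin]
  calc r = (M.submatrix f g).rank := hr.symm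
    _ ≤ M.rank := by
        rw [hsub]
        exact (Matrix.rank_mul_le_left _ _).trans (Matrix.rank_mul_le_right _ _)

theorem bicomplex_rank_le_min_component_ranks
    {n m r : ℕ} (A : Matrix (Fin n) (Fin m) (ℂ × ℂ))
    (f : Fin r → Fin n) (g : Fin r → Fin m)
    (hf : Function.Injective f) (hg : Function.Injective g)
    (hdet : IsUnit (A.submatrix f g).det) :
    r ≤ (A.map Prod.fst).rank ∧ r ≤ (A.map Prod.snd).rank := by
  constructor
  · apply rank_ge_of_submatrix_isUnit_det _ f g
    have h1 := RingHom.map_det (RingHom.fst ℂ ℂ) (A.submatrix f g)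
    rw [RingHom.mapMatrix_apply] at h1
    have hU : IsUnit ((A.submatrix f g).map (RingHom.fst ℂ ℂ)).det := by
      rw [← h1]; exact hdet.map (RingHom.fst ℂ ℂ)
    simpa [Matrix.submatrix_map] using hU
  · apply rank_ge_of_submatrix_isUnit_det _ f g
    have h1 := RingHom.map_det (RingHom.snd ℂ ℂ) (A.submatrix f g)
    rw [RingHom.mapMatrix_apply] at h1
    have hU : IsUnit ((A.submatrix f g).map (RingHom.snd ℂ ℂ)).det := by
      rw [← h1]; exact hdet.map (RingHom.snd ℂ ℂ)
    simpa [Matrix.submatrix_map] using hU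
end

section
/- Let A be an n×m matrix over ℂ × ℂ with n ≤ m, and suppose there exists an injective map g : Fin n → Fin m such that det (A.submatrix id g) is a unit of ℂ × ℂ (i.e., the bicomplex rank of A equals n). Then rank(¹A) = n and rank(²A) = n, where rank denotes the usual rank of a complex matrix. -/
theorem bicomplex_full_rank_implies_component_ranks_full
    {n m : ℕ} (hnm : n ≤ m) (A : Matrix (Fin n) (Fin m) (ℂ × ℂ))
    (g : Fin n → Fin m) (hg : Function.Injective g)
    (hdet : IsUnit (A.submatrix id g).det) :
    (A.map Prod.fst).rank = n ∧ (A.map Prod.snd).rank = n := by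
  have key : ∀ (f : (ℂ × ℂ) →+* ℂ), (A.map f).rank = n := by
    intro f
    have hsub : (A.map f).submatrix id g = (A.submatrix id g).map f := by
      ext i j; simp
    have hdet' : IsUnit ((A.map f).submatrix id g).det := by
      rw [hsub, ← RingHom.mapMatrix_apply, ← RingHom.map_det]
      exact hdet.map f
    have h1 : ((A.map f).submatrix id g).rank = n := by
      rw [Matrix.rank_of_isUnit _ ((Matrix.isUnit_iff_isUnit_det _).mpr hdet')]
      simp
    have h2 : ((A.map f).submatrix id g).rank ≤ (A.map f).rank := by
      have := Matrix.mul_submatrix_one (Equiv.refl (Fin m)) g (A.map f)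
      simp only [Equiv.symm_comp_self, Equiv.refl_symm, Equiv.coe_refl,
        Function.id_comp] at this
      rw [← this]
      exact Matrix.rank_mul_le_left _ _
    have h3 : (A.map f).rank ≤ n := by
      simpa using (A.map f).rank_le_card_height
    omega
  exact ⟨key (RingHom.fst ℂ ℂ), key (RingHom.snd ℂ ℂ)⟩
end

section
/- Let A be an n×n matrix over ℂ × ℂ with det A a unit of ℂ × ℂ. Then the rows of ¹A are linearly independent over ℂ, the rows of ²A are linearly independent over ℂ, and the rows of A are linearly independent over ℂ (in the ℂ-vector space (ℂ × ℂ)^n); i.e., ρ_r(¹A) = ρ_r(²A) = ρ_r(A) = n. -/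
open Matrix

theorem rows_linearIndependent_of_isUnit_det
    {n : ℕ} (A : Matrix (Fin n) (Fin n) (ℂ × ℂ)) (hdet : IsUnit A.det) :
    LinearIndependent ℂ (fun i => (A.map Prod.fst) i) ∧
    LinearIndependent ℂ (fun i => (A.map Prod.snd) i) ∧
    LinearIndependent ℂ (fun i => A i) := by
  have h1 : IsUnit (A.map Prod.fst).det := by
    have := (RingHom.fst ℂ ℂ).map_det A
    simp only [RingHom.coe_fst, RingHom.mapMatrix_apply] at this
    rw [← this]
    exact hdet.map (RingHom.fst ℂ ℂ)
  have h2 : IsUnit (A.map Prod.snd).det := by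
    have := (RingHom.snd ℂ ℂ).map_det A
    simp only [RingHom.coe_snd, RingHom.mapMatrix_apply] at this
    rw [← this]
    exact hdet.map (RingHom.snd ℂ ℂ)
  have l1 : LinearIndependent ℂ (fun i => (A.map Prod.fst) i) :=
    Matrix.linearIndependent_rows_iff_isUnit.2
      ((Matrix.isUnit_iff_isUnit_det _).2 h1)
  have l2 : LinearIndependent ℂ (fun i => (A.map Prod.snd) i) :=
    Matrix.linearIndependent_rows_iff_isUnit.2
      ((Matrix.isUnit_iff_isUnit_det _).2 h2)
  refine ⟨l1, l2, ?_⟩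
  rw [linearIndependent_iff'] at l1 ⊢
  intro s g hg i hi
  refine l1 s g ?_ i hi
  funext j
  have := congrFun hg j
  simpa [Matrix.map_apply, Prod.fst_sum] using congrArg Prod.fst this
end

section
/- Let A be an n×n matrix over ℂ × ℂ with det A a unit of ℂ × ℂ. Then the columns of ¹A are linearly independent over ℂ, the columns of ²A are linearly independent over ℂ, and the columns of A are linearly independent over ℂ (in the ℂ-vector space (ℂ × ℂ)^n); i.e., ρ_c(¹A) = ρ_c(²A) = ρ_c(A) = n. -/
open Matrix

theorem columns_linearIndependent_of_isUnit_det
    {n : ℕ} (A : Matrix (Fin n) (Fin n) (ℂ × ℂ)) (hdet : IsUnit A.det) :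
    LinearIndependent ℂ (fun j => (A.map Prod.fst)ᵀ j) ∧
    LinearIndependent ℂ (fun j => (A.map Prod.snd)ᵀ j) ∧
    LinearIndependent ℂ (fun j => Aᵀ j) := by
  have h1det : IsUnit (A.map Prod.fst).det := by
    have h := hdet.map (RingHom.fst ℂ ℂ)
    rw [RingHom.map_det] at h
    simpa [RingHom.mapMatrix_apply] using h
  have h2det : IsUnit (A.map Prod.snd).det := by
    have h := hdet.map (RingHom.snd ℂ ℂ)
    rw [RingHom.map_det] at h
    simpa [RingHom.mapMatrix_apply] using h
  have h1 : LinearIndependent ℂ (fun j => (A.map Prod.fst)ᵀ j) :=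
    Matrix.linearIndependent_cols_iff_isUnit.2
      ((Matrix.isUnit_iff_isUnit_det _).2 h1det)
  have h2 : LinearIndependent ℂ (fun j => (A.map Prod.snd)ᵀ j) :=
    Matrix.linearIndependent_cols_iff_isUnit.2
      ((Matrix.isUnit_iff_isUnit_det _).2 h2det)
  refine ⟨h1, h2, ?_⟩
  let f : (Fin n → ℂ × ℂ) →ₗ[ℂ] (Fin n → ℂ) :=
    { toFun := fun v i => (v i).1
      map_add' := by intros; rfl
      map_smul' := by intros; rfl }
  have hcomp : (fun j => (A.map Prod.fst)ᵀ j) = f ∘ (fun j => Aᵀ j) := rfl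
  exact (hcomp ▸ h1).of_comp f
end

section
/- Let A be an n×n matrix over ℂ × ℂ with det A a unit of ℂ × ℂ. Then the rows of A are linearly independent over ℂ and the columns of A are linearly independent over ℂ (in the ℂ-vector space (ℂ × ℂ)^n); i.e., ρ_r(A) = ρ_c(A) = n. -/
open Matrix

theorem rows_and_columns_linearIndependent_of_isUnit_det
    {n : ℕ} (A : Matrix (Fin n) (Fin n) (ℂ × ℂ)) (hdet : IsUnit A.det) :
    LinearIndependent ℂ (fun i => A i) ∧ LinearIndependent ℂ (fun j => Aᵀ j) := by
  have hinj : Function.Injective fun r : ℂ => r • (1 : ℂ × ℂ) := by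
    intro a b h
    simpa using congrArg Prod.fst h
  have key : ∀ B : Matrix (Fin n) (Fin n) (ℂ × ℂ), IsUnit B.det →
      LinearIndependent ℂ (fun i => B i) := by
    intro B hB
    have hI : Invertible B := B.invertibleOfIsUnitDet hB
    have hli : LinearIndependent (ℂ × ℂ) (fun i => B i) := by
      rw [Fintype.linearIndependent_iff]
      intro c hc
      have hv : B.vecMul c = 0 := by
        funext j
        have := congrFun hc j
        simpa [Matrix.vecMul, dotProduct, Finset.sum_apply] using this
      have hc0 : c = 0 := by
        calc c = (c ᵥ* B) ᵥ* ⅟B := by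
                rw [Matrix.vecMul_vecMul, mul_invOf_self, Matrix.vecMul_one]
          _ = 0 := by rw [hv, Matrix.zero_vecMul]
      intro i; exact congrFun hc0 i
    exact hli.restrict_scalars hinj
  refine ⟨key A hdet, key Aᵀ ?_⟩
  simpa [Matrix.det_transpose] using hdet
end

section
/- For every n×m matrix A over ℂ × ℂ, the idempotent row rank of A equals the idempotent column rank of A; that is, the ℂ-dimension of (span ℂ (rows of ¹A)).map ι₁ ⊔ (span ℂ (rows of ²A)).map ι₂ in (ℂ × ℂ)^m equals the ℂ-dimension of (span ℂ (columns of ¹A)).map ι₁ ⊔ (span ℂ (columns of ²A)).map ι₂ in (ℂ × ℂ)^n. -/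
/-! The two idempotent components live in the complementary subspaces `ι₁ ℂ^k` and `ι₂ ℂ^k`,
so each idempotent rank is the sum of the ordinary ranks of the component matrices `¹A` and
`²A`, and row rank equals column rank for each of them. -/

open Matrix

/-- Multiplication by `e₁ = (1,0)`: the ℂ-linear map `ℂ^k →ₗ[ℂ] (ℂ × ℂ)^k`,
`v ↦ (i ↦ (v i, 0))`. -/
noncomputable def iota1 (k : ℕ) : (Fin k → ℂ) →ₗ[ℂ] (Fin k → ℂ × ℂ) :=
  LinearMap.pi fun i => (LinearMap.inl ℂ ℂ ℂ).comp (LinearMap.proj i)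

/-- Multiplication by `e₂ = (0,1)`: the ℂ-linear map `ℂ^k →ₗ[ℂ] (ℂ × ℂ)^k`,
`v ↦ (i ↦ (0, v i))`. -/
noncomputable def iota2 (k : ℕ) : (Fin k → ℂ) →ₗ[ℂ] (Fin k → ℂ × ℂ) :=
  LinearMap.pi fun i => (LinearMap.inr ℂ ℂ ℂ).comp (LinearMap.proj i)

open Module Submodule

lemma iota1_injective (k : ℕ) : Function.Injective (iota1 k) := fun _ _ h =>
  funext fun i => congrArg Prod.fst (congrFun h i)

lemma iota2_injective (k : ℕ) : Function.Injective (iota2 k) := fun _ _ h =>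
  funext fun i => congrArg Prod.snd (congrFun h i)

lemma disjoint_range_iota1_range_iota2 (k : ℕ) :
    Disjoint (LinearMap.range (iota1 k)) (LinearMap.range (iota2 k)) := by
  rw [disjoint_iff_inf_le]
  rintro _ ⟨⟨v, rfl⟩, ⟨w, hw⟩⟩
  funext i
  have hvi : v i = 0 := (congrArg Prod.fst (congrFun hw i)).symm
  simp [iota1, hvi]

lemma finrank_map_iota1_sup_map_iota2 {k : ℕ} (p q : Submodule ℂ (Fin k → ℂ)) :
    finrank ℂ ↥(p.map (iota1 k) ⊔ q.map (iota2 k)) = finrank ℂ p + finrank ℂ q := by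
  have hdisj : Disjoint (p.map (iota1 k)) (q.map (iota2 k)) :=
    (disjoint_range_iota1_range_iota2 k).mono LinearMap.map_le_range LinearMap.map_le_range
  have h := finrank_sup_add_finrank_inf_eq (p.map (iota1 k)) (q.map (iota2 k))
  rw [hdisj.eq_bot, finrank_bot, add_zero] at h
  rw [h, (equivMapOfInjective _ (iota1_injective k) p).finrank_eq.symm,
    (equivMapOfInjective _ (iota2_injective k) q).finrank_eq.symm]

theorem Matrix.finrank_span_rows_eq_finrank_span_cols {K m n : Type*} [Field K] [Fintype m]
    [Fintype n] (B : Matrix m n K) :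
    finrank K ↥(span K (Set.range fun i => B i)) =
      finrank K ↥(span K (Set.range fun j => Bᵀ j)) :=
  calc _ = B.rank := B.rank_eq_finrank_span_row.symm
    _ = Bᵀ.rank := B.rank_transpose.symm
    _ = _ := Bᵀ.rank_eq_finrank_span_row

theorem idempotent_row_rank_eq_idempotent_column_rank
    {n m : ℕ} (A : Matrix (Fin n) (Fin m) (ℂ × ℂ)) :
    Module.finrank ℂ
      ↥((Submodule.span ℂ (Set.range fun i => (A.map Prod.fst) i)).map (iota1 m) ⊔
        (Submodule.span ℂ (Set.range fun i => (A.map Prod.snd) i)).map (iota2 m)) =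
    Module.finrank ℂ
      ↥((Submodule.span ℂ (Set.range fun j => (A.map Prod.fst)ᵀ j)).map (iota1 n) ⊔
        (Submodule.span ℂ (Set.range fun j => (A.map Prod.snd)ᵀ j)).map (iota2 n)) := by
  rw [finrank_map_iota1_sup_map_iota2, finrank_map_iota1_sup_map_iota2,
    finrank_span_rows_eq_finrank_span_cols (A.map Prod.fst),
    finrank_span_rows_eq_finrank_span_cols (A.map Prod.snd)]
end

section
/- Consider the 2×3 matrix over ℂ × ℂ given by A = ![![(2,2), (1,0), (1,1)], ![(0,0), (0,0), (1,0)]] (representing the bicomplex matrix [[2, e₁, 1], [0, 0, e₁]]). Then the two rows of A are linearly independent over ℂ and the three columns of A are linearly independent over ℂ (in the ℂ-vector spaces (ℂ × ℂ)^3 and (ℂ × ℂ)^2, respectively); hence the row rank of A is 2 while the column rank of A is 3, so the row rank and column rank of a bicomplex matrix need not coincide. -/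
open Matrix

theorem row_rank_ne_column_rank_example :
    let A : Matrix (Fin 2) (Fin 3) (ℂ × ℂ) :=
      ![![((2:ℂ), (2:ℂ)), ((1:ℂ), (0:ℂ)), ((1:ℂ), (1:ℂ))],
        ![((0:ℂ), (0:ℂ)), ((0:ℂ), (0:ℂ)), ((1:ℂ), (0:ℂ))]]
    LinearIndependent ℂ (fun i => A i) ∧
    LinearIndependent ℂ (fun j => Aᵀ j) ∧
    Module.finrank ℂ (Submodule.span ℂ (Set.range fun i => A i)) = 2 ∧
    Module.finrank ℂ (Submodule.span ℂ (Set.range fun j => Aᵀ j)) = 3 := by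
  intro A
  have hrow : LinearIndependent ℂ (fun i => A i) := by
    rw [Fintype.linearIndependent_iff]
    intro g hg
    have h2 := congrFun hg 2
    simp [A, Fin.sum_univ_two, Prod.ext_iff, Prod.smul_def, smul_eq_mul] at h2
    obtain ⟨ha, hb⟩ := h2
    intro i
    fin_cases i
    · show g 0 = 0; linear_combination hb
    · show g 1 = 0; linear_combination ha - hb
  have hcol : LinearIndependent ℂ (fun j => Aᵀ j) := by
    rw [Fintype.linearIndependent_iff]
    intro g hg
    have h0 := congrFun hg 0
    have h1 := congrFun hg 1
    simp [A, Fin.sum_univ_three, Prod.ext_iff, Prod.smul_def, smul_eq_mul, transpose] at h0 h1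
    obtain ⟨e1, e2⟩ := h0
    intro i
    fin_cases i
    · show g 0 = 0; linear_combination (e2 - h1) / 2
    · show g 1 = 0; linear_combination e1 - e2
    · show g 2 = 0; linear_combination h1
  refine ⟨hrow, hcol, ?_, ?_⟩
  · simpa using finrank_span_eq_card hrow
  · simpa using finrank_span_eq_card hcol
end

section
/- Consider the 2×2 matrix over ℂ × ℂ given by A = ![![(1,1), (2,2)], ![(1,0), (0,0)]] (representing the bicomplex matrix [[1, 2], [e₁, 0]]). Then the rows of A are linearly independent over ℂ and the columns of A are linearly independent over ℂ, yet det A is a non-unit of ℂ × ℂ (indeed det A = (−2, 0)); hence a square bicomplex matrix with singular determinant can have linearly independent rows and columns. -/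
open Matrix

theorem Prod.not_isUnit_of_snd_eq_zero {M N : Type*} [Monoid M] [MonoidWithZero N]
    [Nontrivial N] {x : M × N} (h : x.2 = 0) : ¬IsUnit x := by
  rw [Prod.isUnit_iff, h]
  exact fun hx => not_isUnit_zero hx.2

theorem singular_det_with_linearIndependent_rows_and_columns_example :
    let A : Matrix (Fin 2) (Fin 2) (ℂ × ℂ) :=
      ![![((1:ℂ), (1:ℂ)), ((2:ℂ), (2:ℂ))],
        ![((1:ℂ), (0:ℂ)), ((0:ℂ), (0:ℂ))]]
    LinearIndependent ℂ (fun i => A i) ∧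
    LinearIndependent ℂ (fun j => Aᵀ j) ∧
    ¬ IsUnit A.det ∧
    A.det = ((-2 : ℂ), (0 : ℂ)) := by
  intro A
  have hdet : A.det = ((-2 : ℂ), (0 : ℂ)) := by
    rw [det_fin_two]
    simp [A]
  refine ⟨?_, ?_, Prod.not_isUnit_of_snd_eq_zero (by rw [hdet]), hdet⟩
  -- ℂ acts diagonally, so a coordinate that vanishes in one vector vanishes in all its multiples.
  · rw [linearIndependent_fin2]
    refine ⟨fun h => ?_, fun a h => ?_⟩ <;> simpa [A, Prod.ext_iff] using congrFun h 0
  · rw [linearIndependent_fin2]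
    refine ⟨fun h => ?_, fun a h => ?_⟩
    · simpa [A, transpose, Prod.ext_iff] using congrFun h 0
    · simpa [A, transpose, Prod.ext_iff] using congrFun h 1
end
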